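/- arXiv:2101.08317 — 3 statements merged into one kernel-verified Lean document; each statement's English description precedes it below -/
import Mathlib

section
/- Let F be a non-principal ultrafilter on ℕ and p_n a sequence of pairwise distinct primes. Then the ultraproduct over F of the algebraic closures of the finite fields F_{p_n} is an algebraically closed field of characteristic zero. -/
/-!
By the Lefschetz principle, a sentence that holds in `ACF 0` holds in `ACF q` for all but
finitely many primes `q`. Along a non-principal ultrafilter, an injective sequence of primes
eventually avoids any finite set, so by Łoś's theorem every axiom of `ACF 0` holds in the
ultraproduct.
-/

open FirstOrder Language Filter

theorem Ultrafilter.tendsto_cofinite_of_injective {α β : Type*} {F : Ultrafilter α}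
    (hF : ∀ a, F ≠ pure a) {f : α → β} (hf : f.Injective) : Tendsto f F cofinite :=
  hf.tendsto_cofinite.mono_left <| F.le_cofinite_or_eq_pure.resolve_right fun ⟨a, ha⟩ => hF a ha

theorem FirstOrder.Field.ultraproduct_model_ACF_zero {ι : Type*} {M : ι → Type*}
    [∀ i, Language.ring.Structure (M i)] [∀ i, Nonempty (M i)] {F : Ultrafilter ι}
    {p : ι → Nat.Primes} [∀ i, (Theory.ACF (p i)).Model (M i)] (hp : Tendsto p F cofinite) :
    (Theory.ACF 0).Model ((F : Filter ι).Product M) := by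
  refine (Theory.model_iff _).2 fun φ hφ => (Ultraproduct.sentence_realize φ).2 ?_
  have hbad : {q : Nat.Primes | ¬ Theory.ACF q ⊨ᵇ φ}.Finite :=
    finite_ACF_prime_not_realize_of_ACF_zero_realize φ (Theory.models_sentence_of_mem hφ)
  filter_upwards [hp hbad.compl_mem_cofinite] with i hi
  exact (not_not.1 hi).realize_sentence (M i)

/-- For a non-principal ultrafilter `F` on `ℕ` and a sequence of pairwise distinct
primes `p n`, the ultraproduct of the algebraic closures of the finite fields `𝔽_{p n}` is an
algebraically closed field of characteristic zero (it models the theory `ACF 0`). -/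
theorem ultraproduct_algClosure_distinct_primes_models_ACF_zero
    (F : Ultrafilter ℕ) (hF : ∀ a : ℕ, F ≠ pure a)
    (p : ℕ → ℕ) (hp : ∀ n, (p n).Prime) (hinj : Function.Injective p) :
    letI : ∀ n, Fact (p n).Prime := fun n => ⟨hp n⟩
    letI : ∀ n, Language.ring.Structure (AlgebraicClosure (ZMod (p n))) :=
      fun n => (Ring.compatibleRingOfRing (AlgebraicClosure (ZMod (p n)))).toStructure
    (Theory.ACF 0).Model
      ((F : Filter ℕ).Product (fun n => AlgebraicClosure (ZMod (p n)))) := by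
  let _ : ∀ n, Fact (p n).Prime := fun n => ⟨hp n⟩
  let _ : ∀ n, Ring.CompatibleRing (AlgebraicClosure (ZMod (p n))) :=
    fun n => Ring.compatibleRingOfRing (AlgebraicClosure (ZMod (p n)))
  let q : ℕ → Nat.Primes := fun n => ⟨p n, hp n⟩
  have hq : Tendsto q F cofinite :=
    F.tendsto_cofinite_of_injective hF fun m n h => hinj (congrArg Subtype.val h)
  exact FirstOrder.Field.ultraproduct_model_ACF_zero hq
end

section
/- Let t, k ∈ k with char k = 0 and set λ = k, β = −t/2 − k(r−2)/4. In the spherical subalgebra B_{t,k}(n,r), the elements e(g), K(g) := Σ_i (g)_i x_i e, Q(g) := Σ_i (g)_i y_i e, P(g) := Σ_i (g)_i (x_i y_i + y_i x_i)/2 · e (for g ∈ sl_r) satisfy, for indices 1 ≤ a,b,c,d ≤ r with a≠b, c≠d, b≠c, a≠d: [K(E_{ab}), Q(E_{cd})] = −λ Σ_{i≠j} (E_{ad})_i (E_{cb})_j e, up to the identification of elements via the symmetrizer e. -/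
/-! STATEMENT 14: in the spherical subalgebra `B_{t,c}(n,r) = e H_{t,c}(n,r) e` of the extended
Cherednik algebra, for `g = E_{ab}`, `h = E_{cd}` with `a≠b`, `c≠d`, `b≠c`, `a≠d`, and with
`λ = c`, one has `[K(E_{ab}), Q(E_{cd})] = −λ ∑_{i≠j} (E_{ad})_i (E_{cb})_j e`.
The algebra `H_{t,c}(n,r)` is given by its presentation; we state the identity in any algebra
`A` equipped with a map from the free algebra killing the defining relations (equivalently, in
the quotient algebra `H_{t,c}(n,r)` itself). -/

/-- Generators of the extended Cherednik algebra `H_{t,k}(n,r)`. -/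
inductive CherGen (n r : ℕ) : Type
  | x (i : Fin n)
  | y (i : Fin n)
  | g (s : Equiv.Perm (Fin n))
  | E (i : Fin n) (a b : Fin r)

section
variable (k : Type) [Field k] (t c : k) (n r : ℕ)

def chX (i : Fin n) : FreeAlgebra k (CherGen n r) := FreeAlgebra.ι k (.x i)
def chY (i : Fin n) : FreeAlgebra k (CherGen n r) := FreeAlgebra.ι k (.y i)
def chG (s : Equiv.Perm (Fin n)) : FreeAlgebra k (CherGen n r) := FreeAlgebra.ι k (.g s)
def chE (i : Fin n) (a b : Fin r) : FreeAlgebra k (CherGen n r) := FreeAlgebra.ι k (.E i a b)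
def chSigma (i j : Fin n) : FreeAlgebra k (CherGen n r) :=
  ∑ a : Fin r, ∑ b : Fin r, chE k n r i a b * chE k n r j b a

/-- Defining relations of the extended Cherednik algebra `H_{t,c}(n,r)`. -/
inductive CherRel : FreeAlgebra k (CherGen n r) → FreeAlgebra k (CherGen n r) → Prop
  | xx (i j : Fin n) : CherRel (chX k n r i * chX k n r j) (chX k n r j * chX k n r i)
  | yy (i j : Fin n) : CherRel (chY k n r i * chY k n r j) (chY k n r j * chY k n r i)
  | yx_diag (i : Fin n) :
      CherRel (chY k n r i * chX k n r i)
        (chX k n r i * chY k n r i + algebraMap k _ t -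
          c • ∑ m ∈ Finset.univ.erase i, chG k n r (Equiv.swap i m) * chSigma k n r i m)
  | yx_off (i j : Fin n) (h : i ≠ j) :
      CherRel (chY k n r i * chX k n r j)
        (chX k n r j * chY k n r i + c • (chG k n r (Equiv.swap i j) * chSigma k n r i j))
  | gmul (s s' : Equiv.Perm (Fin n)) : CherRel (chG k n r s * chG k n r s') (chG k n r (s * s'))
  | gone : CherRel (chG k n r 1) 1
  | gx (s : Equiv.Perm (Fin n)) (i : Fin n) :
      CherRel (chG k n r s * chX k n r i) (chX k n r (s i) * chG k n r s)
  | gy (s : Equiv.Perm (Fin n)) (i : Fin n) :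
      CherRel (chG k n r s * chY k n r i) (chY k n r (s i) * chG k n r s)
  | gE (s : Equiv.Perm (Fin n)) (i : Fin n) (a b : Fin r) :
      CherRel (chG k n r s * chE k n r i a b) (chE k n r (s i) a b * chG k n r s)
  | EE (i : Fin n) (a b a' b' : Fin r) :
      CherRel (chE k n r i a b * chE k n r i a' b')
        (if a' = b then chE k n r i a b' else 0)
  | EEc (i j : Fin n) (h : i ≠ j) (a b a' b' : Fin r) :
      CherRel (chE k n r i a b * chE k n r j a' b') (chE k n r j a' b' * chE k n r i a b)
  | Esum (i : Fin n) : CherRel (∑ a : Fin r, chE k n r i a a) 1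
  | xE (i j : Fin n) (a b : Fin r) :
      CherRel (chX k n r i * chE k n r j a b) (chE k n r j a b * chX k n r i)
  | yE (i j : Fin n) (a b : Fin r) :
      CherRel (chY k n r i * chE k n r j a b) (chE k n r j a b * chY k n r i)

/-- The symmetrizer `e = (1/n!) ∑_{s ∈ Sₙ} s`. -/
noncomputable def chSym : FreeAlgebra k (CherGen n r) :=
  ((n.factorial : k))⁻¹ • ∑ s : Equiv.Perm (Fin n), chG k n r s

end

/-! The symmetrizer `e` absorbs every permutation and is idempotent, so for `Sₙ`-invariant `M`, `N`
one has `(e M e) (e N e) = M N e`; hence `[K, Q] = [T, S] e` with `T = ∑ᵢ E^{ab}_i x_i` and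
`S = ∑ⱼ E^{cd}_j y_j`. The diagonal terms of `[T, S]` vanish since `E^{ab} E^{cd} = 0 = E^{cd} E^{ab}`
(`b ≠ c`, `a ≠ d`); for `i ≠ j` only `[x_i, y_j] = -c s_{ji} σ_{ji}` survives. Pushing `s_{ji}` into
`e` turns `σ_{ji}` into `σ_{ij}`, and `E^{ab}_i E^{cd}_j σ_{ij} = E^{ad}_i E^{cb}_j`. -/

section GroupAverage

variable {ι k G A : Type*} [Field k] [Group G] [Fintype G] [Ring A] [Algebra k A]

theorem semiconjBy_finset_sum {a : A} {s : Finset ι} {v w : ι → A}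
    (h : ∀ i ∈ s, SemiconjBy a (v i) (w i)) :
    SemiconjBy a (∑ i ∈ s, v i) (∑ i ∈ s, w i) := by
  rw [SemiconjBy, Finset.mul_sum, Finset.sum_mul]
  exact Finset.sum_congr rfl fun i hi => h i hi

theorem commute_finset_sum_of_semiconjBy_perm {a : A} {s : Finset ι} {v : ι → A}
    (σ : Equiv.Perm ι) (hs : ∀ i, i ∈ s ↔ σ i ∈ s) (h : ∀ i ∈ s, SemiconjBy a (v i) (v (σ i))) :
    Commute a (∑ i ∈ s, v i) := by
  have hσ : ∑ i ∈ s, v (σ i) = ∑ i ∈ s, v i := Finset.sum_equiv σ hs fun _ _ => rfl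
  simpa only [Commute, hσ] using semiconjBy_finset_sum h

theorem Ring.lie_sum_sum {κ : Type*} (s : Finset ι) (t : Finset κ) (f : ι → A) (g : κ → A) :
    ⁅∑ i ∈ s, f i, ∑ j ∈ t, g j⁆ = ∑ i ∈ s, ∑ j ∈ t, ⁅f i, g j⁆ := by
  rw [Ring.lie_def, Finset.sum_mul_sum, Finset.sum_mul_sum, Finset.sum_comm (s := t)]
  simp only [Ring.lie_def, Finset.sum_sub_distrib]

variable (k) in
noncomputable def groupAverage (ρ : G →* A) : A :=
  (Fintype.card G : k)⁻¹ • ∑ g, ρ g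

variable {ρ : G →* A}

theorem map_mul_groupAverage (g : G) : ρ g * groupAverage k ρ = groupAverage k ρ := by
  rw [groupAverage, mul_smul_comm, Finset.mul_sum]
  simp only [← map_mul]
  exact congrArg _ (Equiv.sum_comp (Equiv.mulLeft g) ρ)

theorem groupAverage_mul_self [CharZero k] :
    groupAverage k ρ * groupAverage k ρ = groupAverage k ρ := by
  nth_rewrite 1 [groupAverage]
  rw [smul_mul_assoc, Finset.sum_mul]
  simp only [map_mul_groupAverage]
  rw [Finset.sum_const, Finset.card_univ, ← Nat.cast_smul_eq_nsmul k, smul_smul,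
    inv_mul_cancel₀ (Nat.cast_ne_zero.mpr Fintype.card_ne_zero), one_smul]

theorem commute_groupAverage {M : A} (hM : ∀ g, Commute (ρ g) M) :
    Commute (groupAverage k ρ) M :=
  (Commute.sum_left _ _ _ fun g _ => hM g).smul_left _

theorem groupAverage_mul_mul_groupAverage [CharZero k] {M : A} (hM : ∀ g, Commute (ρ g) M) :
    groupAverage k ρ * M * groupAverage k ρ = M * groupAverage k ρ := by
  rw [(commute_groupAverage hM).eq, mul_assoc, groupAverage_mul_self]

theorem mul_groupAverage_mul_mul_groupAverage [CharZero k] (M : A) {N : A}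
    (hN : ∀ g, Commute (ρ g) N) :
    M * groupAverage k ρ * (N * groupAverage k ρ) = M * N * groupAverage k ρ := by
  rw [← mul_assoc, mul_assoc M, (commute_groupAverage hN).eq, ← mul_assoc, mul_assoc,
    groupAverage_mul_self]

end GroupAverage

namespace ExtendedCherednik

variable {k : Type} [Field k] {t c : k} {n r : ℕ} {A : Type} [Ring A] [Algebra k A]
  {φ : FreeAlgebra k (CherGen n r) →ₐ[k] A} (hφ : ∀ u v, CherRel k t c n r u v → φ u = φ v)
include hφ

def permHom : Equiv.Perm (Fin n) →* A where
  toFun s := φ (chG k n r s)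
  map_one' := by rw [hφ _ _ .gone, map_one]
  map_mul' s s' := by rw [← map_mul, hφ _ _ (.gmul s s')]

theorem map_chSym : φ (chSym k n r) = groupAverage k (permHom hφ) := by
  simp only [chSym, map_smul, map_sum, groupAverage, Fintype.card_perm, Fintype.card_fin]
  rfl

theorem semiconjBy_chG_chX (s : Equiv.Perm (Fin n)) (i : Fin n) :
    SemiconjBy (φ (chG k n r s)) (φ (chX k n r i)) (φ (chX k n r (s i))) := by
  rw [SemiconjBy, ← map_mul, ← map_mul]; exact hφ _ _ (.gx s i)

theorem semiconjBy_chG_chY (s : Equiv.Perm (Fin n)) (i : Fin n) :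
    SemiconjBy (φ (chG k n r s)) (φ (chY k n r i)) (φ (chY k n r (s i))) := by
  rw [SemiconjBy, ← map_mul, ← map_mul]; exact hφ _ _ (.gy s i)

theorem semiconjBy_chG_chE (s : Equiv.Perm (Fin n)) (i : Fin n) (a b : Fin r) :
    SemiconjBy (φ (chG k n r s)) (φ (chE k n r i a b)) (φ (chE k n r (s i) a b)) := by
  rw [SemiconjBy, ← map_mul, ← map_mul]; exact hφ _ _ (.gE s i a b)

theorem semiconjBy_chG_chSigma (s : Equiv.Perm (Fin n)) (i j : Fin n) :
    SemiconjBy (φ (chG k n r s)) (φ (chSigma k n r i j)) (φ (chSigma k n r (s i) (s j))) := by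
  simp only [chSigma, map_sum, map_mul]
  exact semiconjBy_finset_sum fun _ _ => semiconjBy_finset_sum fun _ _ =>
    (semiconjBy_chG_chE hφ s i _ _).mul_right (semiconjBy_chG_chE hφ s j _ _)

theorem commute_chX_chE (i j : Fin n) (a b : Fin r) :
    Commute (φ (chX k n r i)) (φ (chE k n r j a b)) := by
  rw [Commute, SemiconjBy, ← map_mul, ← map_mul]; exact hφ _ _ (.xE i j a b)

theorem commute_chY_chE (i j : Fin n) (a b : Fin r) :
    Commute (φ (chY k n r i)) (φ (chE k n r j a b)) := by
  rw [Commute, SemiconjBy, ← map_mul, ← map_mul]; exact hφ _ _ (.yE i j a b)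

theorem commute_chE_chE_of_ne {i j : Fin n} (hij : i ≠ j) (a b a' b' : Fin r) :
    Commute (φ (chE k n r i a b)) (φ (chE k n r j a' b')) := by
  rw [Commute, SemiconjBy, ← map_mul, ← map_mul]; exact hφ _ _ (.EEc i j hij a b a' b')

theorem chE_mul_chE (i : Fin n) (a b a' b' : Fin r) :
    φ (chE k n r i a b) * φ (chE k n r i a' b') =
      if a' = b then φ (chE k n r i a b') else 0 := by
  rw [← map_mul, hφ _ _ (.EE i a b a' b'), apply_ite φ, map_zero]

theorem chY_mul_chX_of_ne {i j : Fin n} (hij : i ≠ j) :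
    φ (chY k n r i) * φ (chX k n r j) =
      φ (chX k n r j) * φ (chY k n r i) +
        c • (φ (chG k n r (Equiv.swap i j)) * φ (chSigma k n r i j)) := by
  rw [← map_mul, hφ _ _ (.yx_off i j hij), map_add, map_smul, map_mul, map_mul]

theorem chE_mul_chE_mul_chSigma {i j : Fin n} (hij : i ≠ j) (a b c' d : Fin r) :
    φ (chE k n r i a b) * φ (chE k n r j c' d) * φ (chSigma k n r i j) =
      φ (chE k n r i a d) * φ (chE k n r j c' b) := by
  have term : ∀ p q : Fin r,
      φ (chE k n r i a b) * φ (chE k n r j c' d) *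
          (φ (chE k n r i p q) * φ (chE k n r j q p)) =
        if q = d then if p = b then φ (chE k n r i a q) * φ (chE k n r j c' p) else 0
        else 0 := by
    intro p q
    rw [(commute_chE_chE_of_ne hφ hij.symm c' d p q).mul_mul_mul_comm,
      chE_mul_chE hφ, chE_mul_chE hφ]
    split_ifs <;> simp only [mul_zero, zero_mul]
  simp only [chSigma, map_sum, map_mul, Finset.mul_sum, term, Finset.sum_ite_eq',
    Finset.mem_univ, if_true]

theorem chE_mul_mul_chE_mul_eq_zero {i : Fin n} {a b c' d : Fin r} (hbc : b ≠ c') {z : A}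
    (hz : Commute z (φ (chE k n r i c' d))) (w : A) :
    φ (chE k n r i a b) * z * (φ (chE k n r i c' d) * w) = 0 := by
  rw [hz.mul_mul_mul_comm, chE_mul_chE hφ, if_neg hbc.symm, zero_mul]

theorem lie_chE_chX_chE_chY_self {i : Fin n} {a b c' d : Fin r} (hbc : b ≠ c') (had : a ≠ d) :
    ⁅φ (chE k n r i a b) * φ (chX k n r i), φ (chE k n r i c' d) * φ (chY k n r i)⁆ = 0 := by
  rw [Ring.lie_def, chE_mul_mul_chE_mul_eq_zero hφ hbc (commute_chX_chE hφ i i c' d),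
    chE_mul_mul_chE_mul_eq_zero hφ had.symm (commute_chY_chE hφ i i a b), sub_zero]

theorem lie_chE_chX_chE_chY_of_ne {i j : Fin n} (hij : i ≠ j) (a b c' d : Fin r) :
    ⁅φ (chE k n r i a b) * φ (chX k n r i), φ (chE k n r j c' d) * φ (chY k n r j)⁆ =
      -c • (φ (chE k n r i a b) * φ (chE k n r j c' d) *
        (φ (chG k n r (Equiv.swap j i)) * φ (chSigma k n r j i))) := by
  rw [Ring.lie_def, (commute_chX_chE hφ i j c' d).mul_mul_mul_comm,
    (commute_chY_chE hφ j i a b).mul_mul_mul_comm,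
    (commute_chE_chE_of_ne hφ hij.symm c' d a b).eq, ← mul_sub, chY_mul_chX_of_ne hφ hij.symm,
    sub_add_cancel_left, mul_neg, mul_smul_comm, neg_smul]

theorem chG_mul_chSym (s : Equiv.Perm (Fin n)) :
    φ (chG k n r s) * φ (chSym k n r) = φ (chSym k n r) := by
  rw [map_chSym hφ]; exact map_mul_groupAverage (k := k) (ρ := permHom hφ) s

theorem map_chSym_mul_mul_chSym [CharZero k] {M : FreeAlgebra k (CherGen n r)}
    (hM : ∀ s, Commute (φ (chG k n r s)) (φ M)) :
    φ (chSym k n r * M * chSym k n r) = φ M * φ (chSym k n r) := by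
  rw [map_mul, map_mul, map_chSym hφ]; exact groupAverage_mul_mul_groupAverage hM

theorem mul_chSym_mul_mul_chSym [CharZero k] (M : A) {N : A}
    (hN : ∀ s, Commute (φ (chG k n r s)) N) :
    M * φ (chSym k n r) * (N * φ (chSym k n r)) = M * N * φ (chSym k n r) := by
  rw [map_chSym hφ]; exact mul_groupAverage_mul_mul_groupAverage M hN

theorem commute_chG_map_sum_chE_mul_chX (a b : Fin r) (s : Equiv.Perm (Fin n)) :
    Commute (φ (chG k n r s)) (φ (∑ i, chE k n r i a b * chX k n r i)) := by
  simp only [map_sum, map_mul]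
  exact commute_finset_sum_of_semiconjBy_perm s (by simp) fun i _ =>
    (semiconjBy_chG_chE hφ s i a b).mul_right (semiconjBy_chG_chX hφ s i)

theorem commute_chG_map_sum_chE_mul_chY (a b : Fin r) (s : Equiv.Perm (Fin n)) :
    Commute (φ (chG k n r s)) (φ (∑ i, chE k n r i a b * chY k n r i)) := by
  simp only [map_sum, map_mul]
  exact commute_finset_sum_of_semiconjBy_perm s (by simp) fun i _ =>
    (semiconjBy_chG_chE hφ s i a b).mul_right (semiconjBy_chG_chY hφ s i)

theorem commute_chG_map_sum_offDiag_chE_mul_chE (a b c' d : Fin r) (s : Equiv.Perm (Fin n)) :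
    Commute (φ (chG k n r s)) (φ (∑ p ∈ (Finset.univ : Finset (Fin n × Fin n)).filter
      (fun p => p.1 ≠ p.2), chE k n r p.1 a b * chE k n r p.2 c' d)) := by
  simp only [map_sum, map_mul]
  exact commute_finset_sum_of_semiconjBy_perm (Equiv.prodCongr s s) (by simp) fun p _ =>
    (semiconjBy_chG_chE hφ s p.1 a b).mul_right (semiconjBy_chG_chE hφ s p.2 c' d)

theorem lie_chE_chX_chE_chY_mul_chSym_of_ne {i j : Fin n} (hij : i ≠ j) (a b c' d : Fin r) :
    ⁅φ (chE k n r i a b) * φ (chX k n r i), φ (chE k n r j c' d) * φ (chY k n r j)⁆ *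
        φ (chSym k n r) =
      -c • (φ (chE k n r i a d) * φ (chE k n r j c' b) * φ (chSym k n r)) := by
  have hσ := (semiconjBy_chG_chSigma hφ (Equiv.swap j i) j i).eq
  rw [Equiv.swap_apply_left, Equiv.swap_apply_right] at hσ
  rw [lie_chE_chX_chE_chY_of_ne hφ hij, smul_mul_assoc, hσ, ← mul_assoc, mul_assoc,
    chG_mul_chSym hφ, chE_mul_chE_mul_chSigma hφ hij]

theorem lie_sum_chE_chX_sum_chE_chY {a b c' d : Fin r} (hbc : b ≠ c') (had : a ≠ d) :
    ⁅∑ i, φ (chE k n r i a b) * φ (chX k n r i), ∑ j, φ (chE k n r j c' d) * φ (chY k n r j)⁆ =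
      ∑ p ∈ (Finset.univ : Finset (Fin n × Fin n)).filter (fun p => p.1 ≠ p.2),
        ⁅φ (chE k n r p.1 a b) * φ (chX k n r p.1),
          φ (chE k n r p.2 c' d) * φ (chY k n r p.2)⁆ := by
  rw [Ring.lie_sum_sum, ← Fintype.sum_prod_type']
  refine (Finset.sum_subset (Finset.filter_subset _ _) fun p _ hp => ?_).symm
  rw [Finset.mem_filter, not_and, not_not] at hp
  rw [hp (Finset.mem_univ p)]
  exact lie_chE_chX_chE_chY_self hφ hbc had

end ExtendedCherednik

open ExtendedCherednik in
theorem spherical_KQ_commutator_general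
    (k : Type) [Field k] [CharZero k] (t c : k) (n r : ℕ)
    (a b c' d : Fin r) (hbc : b ≠ c') (had : a ≠ d)
    (A : Type) [Ring A] [Algebra k A]
    (φ : FreeAlgebra k (CherGen n r) →ₐ[k] A)
    (hφ : ∀ u v, CherRel k t c n r u v → φ u = φ v) :
    let e := chSym k n r
    let K := e * (∑ i : Fin n, chE k n r i a b * chX k n r i) * e
    let Q := e * (∑ i : Fin n, chE k n r i c' d * chY k n r i) * e
    φ K * φ Q - φ Q * φ K =
      -c • φ (e * (∑ p ∈ (Finset.univ : Finset (Fin n × Fin n)).filter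
          (fun p => p.1 ≠ p.2), chE k n r p.1 a d * chE k n r p.2 c' b) * e) := by
  intro e K Q
  rw [map_chSym_mul_mul_chSym hφ (commute_chG_map_sum_chE_mul_chX hφ a b),
    map_chSym_mul_mul_chSym hφ (commute_chG_map_sum_chE_mul_chY hφ c' d),
    map_chSym_mul_mul_chSym hφ (commute_chG_map_sum_offDiag_chE_mul_chE hφ a d c' b),
    mul_chSym_mul_mul_chSym hφ _ (commute_chG_map_sum_chE_mul_chY hφ c' d),
    mul_chSym_mul_mul_chSym hφ _ (commute_chG_map_sum_chE_mul_chX hφ a b),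
    ← sub_mul, ← Ring.lie_def]
  simp only [map_sum, map_mul]
  rw [lie_sum_chE_chX_sum_chE_chY hφ hbc had, Finset.sum_mul, Finset.sum_mul, Finset.smul_sum]
  exact Finset.sum_congr rfl fun p hp =>
    lie_chE_chX_chE_chY_mul_chSym_of_ne hφ (Finset.mem_filter.mp hp).2 a b c' d

theorem spherical_KQ_commutator
    (k : Type) [Field k] [CharZero k] (t c : k) (n r : ℕ)
    (a b c' d : Fin r) (hab : a ≠ b) (hcd : c' ≠ d) (hbc : b ≠ c') (had : a ≠ d)
    (A : Type) [Ring A] [Algebra k A]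
    (φ : FreeAlgebra k (CherGen n r) →ₐ[k] A)
    (hφ : ∀ u v, CherRel k t c n r u v → φ u = φ v) :
    let e := chSym k n r
    let K := e * (∑ i : Fin n, chE k n r i a b * chX k n r i) * e
    let Q := e * (∑ i : Fin n, chE k n r i c' d * chY k n r i) * e
    φ K * φ Q - φ Q * φ K =
      -c • φ (e * (∑ p ∈ (Finset.univ : Finset (Fin n × Fin n)).filter
          (fun p => p.1 ≠ p.2), chE k n r p.1 a d * chE k n r p.2 c' b) * e) :=
  spherical_KQ_commutator_general k t c n r a b c' d hbc had A φ hφ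
end

section
/- Let H = E_{11} − E_{22} ∈ gl_r (r ≥ 2). In the spherical subalgebra B_{t,k}(n,r) over a field of characteristic 0 (or > n), the commutator [Σ_i (H)_i x_i e, Σ_j (H)_j y_j e] equals −(t + rk) Σ_i (E_{11}+E_{22})_i e plus an element of the subalgebra generated by the degree-zero elements Σ_i (z)_i e for z ∈ End(k^r) taken pairwise (i.e., plus Σ_{i≠j}-type quadratic terms in such elements). -/
namespace Stmt18

variable {k : Type} [Field k] (t c : k) {n r : ℕ}
variable {A : Type} [Ring A] [Algebra k A]
variable (φ : FreeAlgebra k (CherGen n r) →ₐ[k] A)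

noncomputable def aX (i : Fin n) : A := φ (chX k n r i)
noncomputable def aY (i : Fin n) : A := φ (chY k n r i)
noncomputable def aG (s : Equiv.Perm (Fin n)) : A := φ (chG k n r s)
noncomputable def aE (i : Fin n) (a b : Fin r) : A := φ (chE k n r i a b)
noncomputable def aS : A := φ (chSym k n r)
noncomputable def aSig (i j : Fin n) : A := φ (chSigma k n r i j)

variable (hφ : ∀ u v, CherRel k t c n r u v → φ u = φ v)

lemma aSig_eq (i j : Fin n) :
    aSig φ i j = ∑ a : Fin r, ∑ b : Fin r, aE φ i a b * aE φ j b a := by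
  simp [aSig, chSigma, aE]

lemma aS_eq : aS φ = ((n.factorial : k))⁻¹ • ∑ s : Equiv.Perm (Fin n), aG φ s := by
  simp [aS, chSym, aG]

include hφ

lemma hgg (s s' : Equiv.Perm (Fin n)) : aG φ s * aG φ s' = aG φ (s * s') := by
  simp only [aG, ← map_mul]; exact hφ _ _ (CherRel.gmul s s')

lemma hg1 : aG φ (1 : Equiv.Perm (Fin n)) = 1 := by
  rw [aG, ← map_one φ]; exact hφ _ _ CherRel.gone

lemma hgx (s : Equiv.Perm (Fin n)) (i : Fin n) :
    aG φ s * aX φ i = aX φ (s i) * aG φ s := by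
  simp only [aG, aX, ← map_mul]; exact hφ _ _ (CherRel.gx s i)

lemma hgy (s : Equiv.Perm (Fin n)) (i : Fin n) :
    aG φ s * aY φ i = aY φ (s i) * aG φ s := by
  simp only [aG, aY, ← map_mul]; exact hφ _ _ (CherRel.gy s i)

lemma hgE (s : Equiv.Perm (Fin n)) (i : Fin n) (a b : Fin r) :
    aG φ s * aE φ i a b = aE φ (s i) a b * aG φ s := by
  simp only [aG, aE, ← map_mul]; exact hφ _ _ (CherRel.gE s i a b)

lemma hxE (i j : Fin n) (a b : Fin r) :
    aX φ i * aE φ j a b = aE φ j a b * aX φ i := by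
  simp only [aX, aE, ← map_mul]; exact hφ _ _ (CherRel.xE i j a b)

lemma hyE (i j : Fin n) (a b : Fin r) :
    aY φ i * aE φ j a b = aE φ j a b * aY φ i := by
  simp only [aY, aE, ← map_mul]; exact hφ _ _ (CherRel.yE i j a b)

lemma hEEd (i : Fin n) (a b a' b' : Fin r) :
    aE φ i a b * aE φ i a' b' = if a' = b then aE φ i a b' else 0 := by
  simp only [aE, ← map_mul]
  refine (hφ _ _ (CherRel.EE i a b a' b')).trans ?_
  split <;> simp [aE]

lemma hEEc (i j : Fin n) (h : i ≠ j) (a b a' b' : Fin r) :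
    aE φ i a b * aE φ j a' b' = aE φ j a' b' * aE φ i a b := by
  simp only [aE, ← map_mul]; exact hφ _ _ (CherRel.EEc i j h a b a' b')

lemma hyx_diag (i : Fin n) :
    aY φ i * aX φ i = aX φ i * aY φ i + algebraMap k A t -
      c • ∑ m ∈ Finset.univ.erase i, aG φ (Equiv.swap i m) * aSig φ i m := by
  have := hφ _ _ (CherRel.yx_diag i)
  simpa [aX, aY, aG, aSig, map_sub, map_add, map_mul, map_sum, map_smul] using this

lemma hyx_off (i j : Fin n) (h : i ≠ j) :
    aY φ i * aX φ j = aX φ j * aY φ i +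
      c • (aG φ (Equiv.swap i j) * aSig φ i j) := by
  have := hφ _ _ (CherRel.yx_off i j h)
  simpa [aX, aY, aG, aSig, map_add, map_mul, map_smul] using this

end Stmt18
namespace Stmt18
section Mid
variable {k : Type} [Field k] (t c : k) {n r : ℕ}
variable {A : Type} [Ring A] [Algebra k A]
variable (φ : FreeAlgebra k (CherGen n r) →ₐ[k] A)
variable (hφ : ∀ u v, CherRel k t c n r u v → φ u = φ v)

include hφ in
lemma hgS (s : Equiv.Perm (Fin n)) : aG φ s * aS φ = aS φ := by
  rw [aS_eq, mul_smul_comm, Finset.mul_sum]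
  congr 1
  calc ∑ s' : Equiv.Perm (Fin n), aG φ s * aG φ s'
      = ∑ s' : Equiv.Perm (Fin n), aG φ (s * s') :=
        Finset.sum_congr rfl fun s' _ => hgg t c φ hφ s s'
    _ = ∑ s' : Equiv.Perm (Fin n), aG φ s' :=
        Fintype.sum_equiv (Equiv.mulLeft s) _ _ fun s' => rfl

include hφ in
lemma hSg (s : Equiv.Perm (Fin n)) : aS φ * aG φ s = aS φ := by
  rw [aS_eq, smul_mul_assoc, Finset.sum_mul]
  congr 1
  calc ∑ s' : Equiv.Perm (Fin n), aG φ s' * aG φ s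
      = ∑ s' : Equiv.Perm (Fin n), aG φ (s' * s) :=
        Finset.sum_congr rfl fun s' _ => hgg t c φ hφ s' s
    _ = ∑ s' : Equiv.Perm (Fin n), aG φ s' :=
        Fintype.sum_equiv (Equiv.mulRight s) _ _ fun s' => rfl

include hφ in
lemma hSS [CharZero k] : aS φ * aS φ = aS φ := by
  have h1 : aS φ * aS φ = ((n.factorial : k))⁻¹ • ∑ s : Equiv.Perm (Fin n), aG φ s * aS φ := by
    rw [aS_eq, smul_mul_assoc, Finset.sum_mul]
  rw [h1, Finset.sum_congr rfl fun s _ => hgS t c φ hφ s, Finset.sum_const,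
    Finset.card_univ, Fintype.card_perm, Fintype.card_fin,
    ← Nat.cast_smul_eq_nsmul k, smul_smul,
    inv_mul_cancel₀ (Nat.cast_ne_zero.2 (Nat.factorial_ne_zero n)), one_smul]

lemma aS_comm (z : A) (h : ∀ s, aG φ s * z = z * aG φ s) : aS φ * z = z * aS φ := by
  rw [aS_eq, smul_mul_assoc, mul_smul_comm, Finset.sum_mul, Finset.mul_sum]
  exact congrArg _ (Finset.sum_congr rfl fun s _ => h s)

lemma hg_sum (W : Fin n → A) (s : Equiv.Perm (Fin n))
    (hW : ∀ i, aG φ s * W i = W (s i) * aG φ s) :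
    aG φ s * ∑ i, W i = (∑ i, W i) * aG φ s := by
  rw [Finset.mul_sum, Finset.sum_mul]
  calc ∑ i, aG φ s * W i = ∑ i, W (s i) * aG φ s :=
        Finset.sum_congr rfl fun i _ => hW i
    _ = ∑ i, W i * aG φ s :=
        Fintype.sum_equiv s _ _ fun i => rfl

include hφ in
lemma hgSig (s : Equiv.Perm (Fin n)) (i j : Fin n) :
    aG φ s * aSig φ i j = aSig φ (s i) (s j) * aG φ s := by
  rw [aSig_eq, aSig_eq, Finset.mul_sum, Finset.sum_mul]
  refine Finset.sum_congr rfl fun a _ => ?_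
  rw [Finset.mul_sum, Finset.sum_mul]
  refine Finset.sum_congr rfl fun b _ => ?_
  rw [← mul_assoc, hgE t c φ hφ, mul_assoc, hgE t c φ hφ, ← mul_assoc]

include hφ in
lemma hSigSymm (i j : Fin n) (h : i ≠ j) : aSig φ i j = aSig φ j i := by
  rw [aSig_eq, aSig_eq, Finset.sum_comm]
  exact Finset.sum_congr rfl fun a _ => Finset.sum_congr rfl fun b _ =>
    hEEc t c φ hφ i j h b a a b

/-- sandwiching by the symmetrizer, as a linear map -/
noncomputable def sd : A →ₗ[k] A :=
  (LinearMap.mulRight k (aS φ)) ∘ₗ (LinearMap.mulLeft k (aS φ))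

lemma sd_apply (z : A) : sd φ z = aS φ * z * aS φ := rfl

include hφ in
lemma sd_mulG (z : A) (s : Equiv.Perm (Fin n)) : sd φ (z * aG φ s) = sd φ z := by
  rw [sd_apply, sd_apply, ← mul_assoc, mul_assoc _ (aG φ s), hgS t c φ hφ]

end Mid
end Stmt18
namespace Stmt18
section HL
variable {k : Type} [Field k] (t c : k) {n r : ℕ}
variable {A : Type} [Ring A] [Algebra k A]
variable (φ : FreeAlgebra k (CherGen n r) →ₐ[k] A)
variable (hφ : ∀ u v, CherRel k t c n r u v → φ u = φ v)
variable (p q : Fin r)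

/-- the element `H_i = (E_pp - E_qq)_i` -/
noncomputable def aH (i : Fin n) : A := aE φ i p p - aE φ i q q
/-- `Z_{ab} = ∑_i (E_ab)_i` -/
noncomputable def aZ (a b : Fin r) : A := ∑ i : Fin n, aE φ i a b
/-- `F_{ab} = e Z_{ab} e` -/
noncomputable def aF (a b : Fin r) : A := aS φ * aZ φ a b * aS φ

lemma sum_collapse (α β : Fin r) (f : Fin r → Fin r → A) :
    (∑ a : Fin r, ∑ b : Fin r, if a = α then if b = β then f a b else 0 else 0)
      = f α β := by
  have h1 : ∀ a : Fin r, (∑ b : Fin r, if a = α then if b = β then f a b else 0 else 0)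
      = if a = α then f a β else 0 := by
    intro a; split
    · exact Fintype.sum_ite_eq' β (f a)
    · simp
  rw [Finset.sum_congr rfl fun a _ => h1 a, Fintype.sum_ite_eq' α]

include hφ

lemma hXH (i j : Fin n) : aX φ i * aH φ p q j = aH φ p q j * aX φ i := by
  simp only [aH, mul_sub, sub_mul, hxE t c φ hφ]

lemma hYH (i j : Fin n) : aY φ i * aH φ p q j = aH φ p q j * aY φ i := by
  simp only [aH, mul_sub, sub_mul, hyE t c φ hφ]

lemma hgH (s : Equiv.Perm (Fin n)) (i : Fin n) :
    aG φ s * aH φ p q i = aH φ p q (s i) * aG φ s := by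
  simp only [aH, mul_sub, sub_mul, hgE t c φ hφ]

lemma hHEc (i j : Fin n) (h : i ≠ j) (a b : Fin r) :
    aH φ p q i * aE φ j a b = aE φ j a b * aH φ p q i := by
  simp only [aH, mul_sub, sub_mul, hEEc t c φ hφ i j h]

lemma hHcomm (i j : Fin n) : aH φ p q i * aH φ p q j = aH φ p q j * aH φ p q i := by
  rcases eq_or_ne i j with rfl | h
  · rfl
  · simp only [aH, mul_sub, sub_mul,
      hEEc t c φ hφ i j h p p p p, hEEc t c φ hφ i j h p p q q,
      hEEc t c φ hφ i j h q q p p, hEEc t c φ hφ i j h q q q q]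
    abel

lemma hHsq (hpq : p ≠ q) (i : Fin n) :
    aH φ p q i * aH φ p q i = aE φ i p p + aE φ i q q := by
  simp only [aH, mul_sub, sub_mul, hEEd t c φ hφ, if_pos rfl, if_neg hpq, if_neg hpq.symm]
  abel

lemma hHE (i : Fin n) (a b : Fin r) :
    aH φ p q i * aE φ i a b =
      (if a = p then aE φ i p b else 0) - (if a = q then aE φ i q b else 0) := by
  rw [aH, sub_mul, hEEd t c φ hφ, hEEd t c φ hφ]

lemma hgZ (s : Equiv.Perm (Fin n)) (a b : Fin r) :
    aG φ s * aZ φ a b = aZ φ a b * aG φ s :=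
  hg_sum φ _ s fun i => hgE t c φ hφ s i a b

lemma hSZ (a b : Fin r) : aS φ * aZ φ a b = aZ φ a b * aS φ :=
  aS_comm φ _ fun s => hgZ t c φ hφ s a b

lemma aF_eq [CharZero k] (a b : Fin r) : aF φ a b = aZ φ a b * aS φ := by
  rw [aF, hSZ t c φ hφ, mul_assoc, hSS t c φ hφ]

/-- expansion `(E_pp + E_qq)_i σ_{im} = ∑_b ((E_pb)_i (E_bp)_m + (E_qb)_i (E_bq)_m)` -/
lemma hEsqSig (i m : Fin n) :
    (aE φ i p p + aE φ i q q) * aSig φ i m =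
      ∑ b : Fin r, (aE φ i p b * aE φ m b p + aE φ i q b * aE φ m b q) := by
  rw [aSig_eq]
  simp only [Finset.mul_sum]
  rw [Finset.sum_comm]
  refine Finset.sum_congr rfl fun b _ => ?_
  have step : ∀ a : Fin r, (aE φ i p p + aE φ i q q) * (aE φ i a b * aE φ m b a)
      = (if a = p then aE φ i p b * aE φ m b a else 0)
        + (if a = q then aE φ i q b * aE φ m b a else 0) := by
    intro a
    rw [← mul_assoc, add_mul, hEEd t c φ hφ, hEEd t c φ hφ, add_mul, ite_mul, ite_mul, zero_mul]
  rw [Finset.sum_congr rfl fun a _ => step a, Finset.sum_add_distrib,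
    Fintype.sum_ite_eq' p, Fintype.sum_ite_eq' q]

/-- expansion `H_i H_j σ_{ij}` for `i ≠ j` -/
lemma hHHSig (i j : Fin n) (hij : i ≠ j) :
    aH φ p q i * aH φ p q j * aSig φ i j =
      aE φ i p p * aE φ j p p - aE φ i p q * aE φ j q p
        - aE φ i q p * aE φ j p q + aE φ i q q * aE φ j q q := by
  rw [aSig_eq]
  simp only [Finset.mul_sum]
  have step : ∀ a b : Fin r, aH φ p q i * aH φ p q j * (aE φ i a b * aE φ j b a)
      = ((if a = p then (if b = p then aE φ i p b * aE φ j p a else 0) else 0)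
          - (if a = p then (if b = q then aE φ i p b * aE φ j q a else 0) else 0))
        - ((if a = q then (if b = p then aE φ i q b * aE φ j p a else 0) else 0)
          - (if a = q then (if b = q then aE φ i q b * aE φ j q a else 0) else 0)) := by
    intro a b
    have h1 : aH φ p q i * aH φ p q j * (aE φ i a b * aE φ j b a)
        = ((if a = p then aE φ i p b else 0) - (if a = q then aE φ i q b else 0))
          * ((if b = p then aE φ j p a else 0) - (if b = q then aE φ j q a else 0)) := by
      calc aH φ p q i * aH φ p q j * (aE φ i a b * aE φ j b a)
          = aH φ p q i * (aH φ p q j * aE φ i a b) * aE φ j b a := by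
            rw [mul_assoc, mul_assoc, mul_assoc]
        _ = aH φ p q i * (aE φ i a b * aH φ p q j) * aE φ j b a := by
            rw [hHEc t c φ hφ p q j i hij.symm]
        _ = (aH φ p q i * aE φ i a b) * (aH φ p q j * aE φ j b a) := by
            rw [← mul_assoc, ← mul_assoc, mul_assoc (aH φ p q i * aE φ i a b)]
        _ = _ := by rw [hHE t c φ hφ, hHE t c φ hφ]
    rw [h1, sub_mul, mul_sub, mul_sub]
    simp only [ite_mul, mul_ite, zero_mul, mul_zero, ite_self]
    split_ifs <;> simp
  rw [Finset.sum_congr rfl fun a _ => Finset.sum_congr rfl fun b _ => step a b]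
  simp only [Finset.sum_sub_distrib]
  rw [sum_collapse p p, sum_collapse p q, sum_collapse q p, sum_collapse q q]
  abel

/-- the pairwise product identity -/
lemma hP [CharZero k] (a b a' b' : Fin r) :
    ∑ i : Fin n, ∑ j ∈ Finset.univ.erase i, sd φ (aE φ i a b * aE φ j a' b')
      = aF φ a b * aF φ a' b' - (if a' = b then aF φ a b' else 0) := by
  have key : aZ φ a b * aZ φ a' b'
      = (if a' = b then aZ φ a b' else 0)
        + ∑ i : Fin n, ∑ j ∈ Finset.univ.erase i, aE φ i a b * aE φ j a' b' := by
    rw [aZ, aZ, Finset.sum_mul_sum]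
    have h1 : ∀ i : Fin n, ∑ j : Fin n, aE φ i a b * aE φ j a' b'
        = (if a' = b then aE φ i a b' else 0)
          + ∑ j ∈ Finset.univ.erase i, aE φ i a b * aE φ j a' b' := by
      intro i
      rw [← Finset.add_sum_erase Finset.univ _ (Finset.mem_univ i), hEEd t c φ hφ]
    rw [Finset.sum_congr rfl fun i _ => h1 i, Finset.sum_add_distrib]
    congr 1
    split <;> simp [aZ]
  have hcm : aS φ * (aZ φ a b * aZ φ a' b') = (aZ φ a b * aZ φ a' b') * aS φ := by
    rw [← mul_assoc, hSZ t c φ hφ, mul_assoc, hSZ t c φ hφ, ← mul_assoc]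
  have hFF : aF φ a b * aF φ a' b' = sd φ (aZ φ a b * aZ φ a' b') := by
    rw [sd_apply, hcm, aF_eq t c φ hφ, aF_eq t c φ hφ, mul_assoc (aZ φ a b),
      ← mul_assoc (aS φ), hSZ t c φ hφ, mul_assoc (aZ φ a' b')]
    simp only [mul_assoc]
  have hif : sd φ (if a' = b then aZ φ a b' else 0) = (if a' = b then aF φ a b' else 0) := by
    split <;> simp [sd_apply, aF]
  rw [hFF, key, map_add, hif, Finset.sum_congr rfl fun i _ => (map_sum (sd φ) _ _).symm,
    map_sum]
  abel

end HL
end Stmt18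
namespace Stmt18
section Fin
variable {k : Type} [Field k] (t c : k) {n r : ℕ}
variable {A : Type} [Ring A] [Algebra k A]
variable (φ : FreeAlgebra k (CherGen n r) →ₐ[k] A)
variable (hφ : ∀ u v, CherRel k t c n r u v → φ u = φ v)

lemma sum_collapse₂ {A' : Type} [Ring A'] (α β : Fin r) (f : Fin r → Fin r → A') :
    (∑ a : Fin r, ∑ b : Fin r, if α = a then if β = b then f a b else 0 else 0)
      = f α β := by
  have h1 : ∀ a : Fin r, (∑ b : Fin r, if α = a then if β = b then f a b else 0 else 0)
      = if α = a then f a β else 0 := by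
    intro a; split
    · exact Fintype.sum_ite_eq β (f a)
    · simp
  rw [Finset.sum_congr rfl fun a _ => h1 a, Fintype.sum_ite_eq α]

include hφ in
lemma sd_mul [CharZero k] (x y : A) (hx : aS φ * x = x * aS φ) (hy : aS φ * y = y * aS φ) :
    sd φ x * sd φ y = sd φ (x * y) := by
  have h1 : sd φ x = x * aS φ := by rw [sd_apply, hx, mul_assoc, hSS t c φ hφ]
  have h2 : sd φ y = y * aS φ := by rw [sd_apply, hy, mul_assoc, hSS t c φ hφ]
  have hxy : aS φ * (x * y) = x * y * aS φ := by
    rw [← mul_assoc, hx, mul_assoc, hy, ← mul_assoc]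
  calc sd φ x * sd φ y = x * aS φ * (y * aS φ) := by rw [h1, h2]
    _ = x * (aS φ * y) * aS φ := by simp only [mul_assoc]
    _ = x * (y * aS φ) * aS φ := by rw [hy]
    _ = aS φ * (x * y) * aS φ := by rw [hxy]; simp only [mul_assoc]
    _ = sd φ (x * y) := (sd_apply _ _).symm

end Fin
end Stmt18
namespace Stmt18
section Folds
variable {k : Type} [Field k] {n r : ℕ}
variable {A : Type} [Ring A] [Algebra k A]
variable (φ : FreeAlgebra k (CherGen n r) →ₐ[k] A)

lemma aE_fold (i : Fin n) (a b : Fin r) : φ (chE k n r i a b) = aE φ i a b := rfl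
lemma aS_fold : φ (chSym k n r) = aS φ := rfl

end Folds
end Stmt18
namespace Stmt18
section Main
variable {k : Type} [Field k] (t c : k) {n r : ℕ}
variable {A : Type} [Ring A] [Algebra k A]
variable (φ : FreeAlgebra k (CherGen n r) →ₐ[k] A)
variable (hφ : ∀ u v, CherRel k t c n r u v → φ u = φ v)
variable (p q : Fin r)

/-- `K = ∑ H_i x_i` -/
noncomputable def aK : A := ∑ i : Fin n, aH φ p q i * aX φ i
/-- `Q = ∑ H_i y_i` -/
noncomputable def aQy : A := ∑ i : Fin n, aH φ p q i * aY φ i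

lemma hcomm3 (f : Fin n → Fin n → Fin r → A) :
    (∑ i : Fin n, ∑ m ∈ Finset.univ.erase i, ∑ b : Fin r, f i m b)
      = ∑ b : Fin r, ∑ i : Fin n, ∑ m ∈ Finset.univ.erase i, f i m b := by
  calc (∑ i : Fin n, ∑ m ∈ Finset.univ.erase i, ∑ b : Fin r, f i m b)
      = ∑ i : Fin n, ∑ b : Fin r, ∑ m ∈ Finset.univ.erase i, f i m b :=
        Finset.sum_congr rfl fun i _ => Finset.sum_comm
    _ = ∑ b : Fin r, ∑ i : Fin n, ∑ m ∈ Finset.univ.erase i, f i m b := Finset.sum_comm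

include hφ

lemma hSK : aS φ * aK φ p q = aK φ p q * aS φ := by
  rw [aK]
  exact aS_comm φ _ fun s => hg_sum φ _ s fun i => by
    rw [← mul_assoc, hgH t c φ hφ p q s i, mul_assoc, hgx t c φ hφ s i, ← mul_assoc]

lemma hSQ : aS φ * aQy φ p q = aQy φ p q * aS φ := by
  rw [aQy]
  exact aS_comm φ _ fun s => hg_sum φ _ s fun i => by
    rw [← mul_assoc, hgH t c φ hφ p q s i, mul_assoc, hgy t c φ hφ s i, ← mul_assoc]

lemma expand_comm :
    aK φ p q * aQy φ p q - aQy φ p q * aK φ p q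
      = ∑ i : Fin n, ∑ j : Fin n,
          aH φ p q i * aH φ p q j * (aX φ i * aY φ j - aY φ j * aX φ i) := by
  have t1 : ∀ i j : Fin n, (aH φ p q i * aX φ i) * (aH φ p q j * aY φ j)
      = aH φ p q i * aH φ p q j * (aX φ i * aY φ j) := by
    intro i j
    rw [mul_assoc, ← mul_assoc (aX φ i), hXH t c φ hφ p q i j,
      mul_assoc (aH φ p q j), ← mul_assoc]
  have t2 : ∀ i j : Fin n, (aH φ p q j * aY φ j) * (aH φ p q i * aX φ i)
      = aH φ p q i * aH φ p q j * (aY φ j * aX φ i) := by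
    intro i j
    rw [mul_assoc, ← mul_assoc (aY φ j), hYH t c φ hφ p q j i,
      mul_assoc (aH φ p q i), ← mul_assoc, hHcomm t c φ hφ p q j i]
  rw [aK, aQy, Finset.sum_mul_sum, Finset.sum_mul_sum]
  rw [Finset.sum_comm (f := fun i j => (aH φ p q i * aY φ i) * (aH φ p q j * aX φ j))]
  rw [← Finset.sum_sub_distrib]
  refine Finset.sum_congr rfl fun i _ => ?_
  rw [← Finset.sum_sub_distrib]
  refine Finset.sum_congr rfl fun j _ => ?_
  rw [t1 i j, t2 i j, ← mul_sub]

lemma diag_term [CharZero k] (hpq : p ≠ q) (i : Fin n) :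
    sd φ (aH φ p q i * aH φ p q i * (aX φ i * aY φ i - aY φ i * aX φ i))
      = c • (∑ m ∈ Finset.univ.erase i, ∑ b : Fin r,
            (sd φ (aE φ i p b * aE φ m b p) + sd φ (aE φ i q b * aE φ m b q)))
        - t • sd φ (aE φ i p p + aE φ i q q) := by
  have h1 : aX φ i * aY φ i - aY φ i * aX φ i
      = c • (∑ m ∈ Finset.univ.erase i, aG φ (Equiv.swap i m) * aSig φ i m)
        - algebraMap k A t := by
    rw [hyx_diag t c φ hφ i]; abel
  rw [h1, hHsq t c φ hφ p q hpq i, mul_sub, mul_smul_comm, Finset.mul_sum,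
    map_sub, map_smul, map_sum]
  congr 1
  · congr 1
    refine Finset.sum_congr rfl fun m hm => ?_
    have hmi : m ≠ i := Finset.ne_of_mem_erase hm
    have h2 : aG φ (Equiv.swap i m) * aSig φ i m
        = aSig φ i m * aG φ (Equiv.swap i m) := by
      rw [hgSig t c φ hφ, Equiv.swap_apply_left, Equiv.swap_apply_right,
        hSigSymm t c φ hφ m i hmi]
    rw [h2, ← mul_assoc, sd_mulG t c φ hφ, hEsqSig t c φ hφ p q i m, map_sum]
    exact Finset.sum_congr rfl fun b _ => map_add _ _ _
  · rw [← Algebra.commutes, ← Algebra.smul_def, map_smul]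

lemma off_term (i j : Fin n) (hji : j ≠ i) :
    sd φ (aH φ p q i * aH φ p q j * (aX φ i * aY φ j - aY φ j * aX φ i))
      = c • (sd φ (aE φ i p q * aE φ j q p) + sd φ (aE φ i q p * aE φ j p q)
           - sd φ (aE φ i p p * aE φ j p p) - sd φ (aE φ i q q * aE φ j q q)) := by
  have h1 : aX φ i * aY φ j - aY φ j * aX φ i
      = -(c • (aG φ (Equiv.swap j i) * aSig φ j i)) := by
    rw [hyx_off t c φ hφ j i hji]; abel
  have h2 : aG φ (Equiv.swap j i) * aSig φ j i
      = aSig φ i j * aG φ (Equiv.swap j i) := by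
    rw [hgSig t c φ hφ, Equiv.swap_apply_left, Equiv.swap_apply_right]
  rw [h1, h2, mul_neg, mul_smul_comm, ← mul_assoc, map_neg, map_smul,
    sd_mulG t c φ hφ, hHHSig t c φ hφ p q i j hji.symm,
    map_add, map_sub, map_sub, ← smul_neg]
  congr 1
  abel

lemma main_identity [CharZero k] (hpq : p ≠ q) :
    sd φ (aK φ p q * aQy φ p q - aQy φ p q * aK φ p q)
      = -(t + (r : k) * c) • (aF φ p p + aF φ q q)
        + (c • (∑ b : Fin r, (aF φ p b * aF φ b p + aF φ q b * aF φ b q))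
           - c • (aF φ p p * aF φ p p - aF φ p q * aF φ q p
                - aF φ q p * aF φ p q + aF φ q q * aF φ q q)) := by
  rw [expand_comm t c φ hφ p q, map_sum,
    Finset.sum_congr rfl fun i _ => map_sum (sd φ) _ Finset.univ,
    Finset.sum_congr rfl fun i _ =>
      (Finset.add_sum_erase _ _ (Finset.mem_univ i)).symm,
    Finset.sum_add_distrib,
    Finset.sum_congr rfl fun i _ => diag_term t c φ hφ p q hpq i,
    Finset.sum_congr rfl fun i _ => Finset.sum_congr rfl fun j hj =>
      off_term t c φ hφ p q i j (Finset.ne_of_mem_erase hj)]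
  -- diagonal part
  rw [Finset.sum_sub_distrib, ← Finset.smul_sum, ← Finset.smul_sum]
  have hR : (∑ i : Fin n, sd φ (aE φ i p p + aE φ i q q)) = aF φ p p + aF φ q q := by
    rw [← map_sum, Finset.sum_add_distrib, map_add]; rfl
  rw [hR]
  have hdiagsum : (∑ i : Fin n, ∑ m ∈ Finset.univ.erase i, ∑ b : Fin r,
        (sd φ (aE φ i p b * aE φ m b p) + sd φ (aE φ i q b * aE φ m b q)))
      = (∑ b : Fin r, (aF φ p b * aF φ b p + aF φ q b * aF φ b q))
        - (r : k) • (aF φ p p + aF φ q q) := by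
    simp only [Finset.sum_add_distrib]
    rw [hcomm3 (fun i m b => sd φ (aE φ i p b * aE φ m b p)),
      hcomm3 (fun i m b => sd φ (aE φ i q b * aE φ m b q)),
      Finset.sum_congr rfl fun b _ => hP t c φ hφ p b b p,
      Finset.sum_congr rfl fun b _ => hP t c φ hφ q b b q]
    simp only [eq_self_iff_true, if_true, Finset.sum_sub_distrib, Finset.sum_const,
      Finset.card_univ, Fintype.card_fin]
    rw [← Nat.cast_smul_eq_nsmul k (n := r), ← Nat.cast_smul_eq_nsmul k (n := r)]
    module
  rw [hdiagsum]
  have hoffsum : (∑ i : Fin n, ∑ j ∈ Finset.univ.erase i,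
      c • (sd φ (aE φ i p q * aE φ j q p) + sd φ (aE φ i q p * aE φ j p q)
         - sd φ (aE φ i p p * aE φ j p p) - sd φ (aE φ i q q * aE φ j q q)))
    = c • ((aF φ p q * aF φ q p - aF φ p p) + (aF φ q p * aF φ p q - aF φ q q)
         - (aF φ p p * aF φ p p - aF φ p p) - (aF φ q q * aF φ q q - aF φ q q)) := by
    simp only [← Finset.smul_sum]
    congr 1
    simp only [Finset.sum_sub_distrib, Finset.sum_add_distrib]
    rw [hP t c φ hφ p q q p, hP t c φ hφ q p p q, hP t c φ hφ p p p p,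
      hP t c φ hφ q q q q]
    simp only [eq_self_iff_true, if_true]
    try abel
  rw [hoffsum]
  module

end Main
end Stmt18
theorem spherical_H_commutator_rank_element
    (k : Type) [Field k] [CharZero k] (t c : k) (n r : ℕ) (hr : 2 ≤ r)
    (A : Type) [Ring A] [Algebra k A]
    (φ : FreeAlgebra k (CherGen n r) →ₐ[k] A)
    (hφ : ∀ u v, CherRel k t c n r u v → φ u = φ v) :
    let i0 : Fin r := ⟨0, by omega⟩
    let i1 : Fin r := ⟨1, by omega⟩
    let e := chSym k n r
    let D : Matrix (Fin r) (Fin r) k → A :=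
      fun z => φ (e * (∑ i : Fin n, ∑ a : Fin r, ∑ b : Fin r, z a b • chE k n r i a b) * e)
    let KH := φ (e * (∑ i : Fin n,
      (chE k n r i i0 i0 - chE k n r i i1 i1) * chX k n r i) * e)
    let QH := φ (e * (∑ i : Fin n,
      (chE k n r i i0 i0 - chE k n r i i1 i1) * chY k n r i) * e)
    ∃ w ∈ Submodule.span k
        {u : A | ∃ z1 z2 : Matrix (Fin r) (Fin r) k, u = D z1 * D z2},
      KH * QH - QH * KH =
        -(t + (r : k) * c) •
            D (Matrix.single i0 i0 1 + Matrix.single i1 i1 1) + w := by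
  intro i0 i1 e D KH QH
  have hpq : i0 ≠ i1 := Fin.ne_of_val_ne Nat.zero_ne_one
  have hKH : KH = Stmt18.sd φ (Stmt18.aK φ i0 i1) := by
    unfold KH e
    simp only [Stmt18.sd_apply, map_mul, map_sum, map_sub, Stmt18.aK, Stmt18.aH,
      Stmt18.aE, Stmt18.aX, Stmt18.aS]
    rw [Finset.mul_sum, Finset.sum_mul]
  have hQH : QH = Stmt18.sd φ (Stmt18.aQy φ i0 i1) := by
    unfold QH e
    simp only [Stmt18.sd_apply, map_mul, map_sum, map_sub, Stmt18.aQy, Stmt18.aH,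
      Stmt18.aE, Stmt18.aY, Stmt18.aS]
    rw [Finset.mul_sum, Finset.sum_mul]
  have hDF : ∀ a b : Fin r, D (Matrix.single a b 1) = Stmt18.aF φ a b := by
    intro a b
    unfold D e
    simp only [map_mul, map_sum, map_smul, Stmt18.aE_fold, Stmt18.aS_fold]
    have hin : ∀ i : Fin n, (∑ a' : Fin r, ∑ b' : Fin r,
        Matrix.single a b (1:k) a' b' • Stmt18.aE φ i a' b') = Stmt18.aE φ i a b := by
      intro i
      have h1 : ∀ a' b' : Fin r, Matrix.single a b (1:k) a' b' • Stmt18.aE φ i a' b'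
          = if a = a' then (if b = b' then Stmt18.aE φ i a' b' else 0) else 0 := by
        intro a' b'
        simp [Matrix.single, ite_and, ite_smul]
      rw [Finset.sum_congr rfl fun a' _ => Finset.sum_congr rfl fun b' _ => h1 a' b',
        Stmt18.sum_collapse₂]
    rw [Finset.sum_congr rfl fun i _ => hin i]
    rfl
  have hD2 : D (Matrix.single i0 i0 1 + Matrix.single i1 i1 1)
      = Stmt18.aF φ i0 i0 + Stmt18.aF φ i1 i1 := by
    unfold D e
    simp only [map_mul, map_sum, map_smul, Stmt18.aE_fold, Stmt18.aS_fold]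
    have hin : ∀ i : Fin n, (∑ a' : Fin r, ∑ b' : Fin r,
        ((Matrix.single i0 i0 (1:k) + Matrix.single i1 i1 1 : Matrix (Fin r) (Fin r) k) a' b')
          • Stmt18.aE φ i a' b')
        = Stmt18.aE φ i i0 i0 + Stmt18.aE φ i i1 i1 := by
      intro i
      have h1 : ∀ a' b' : Fin r,
          ((Matrix.single i0 i0 (1:k) + Matrix.single i1 i1 1 : Matrix (Fin r) (Fin r) k) a' b')
            • Stmt18.aE φ i a' b'
          = (if i0 = a' then (if i0 = b' then Stmt18.aE φ i a' b' else 0) else 0)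
            + (if i1 = a' then (if i1 = b' then Stmt18.aE φ i a' b' else 0) else 0) := by
        intro a' b'
        simp [Matrix.single, Matrix.add_apply, ite_and, add_smul, ite_smul]
      rw [Finset.sum_congr rfl fun a' _ => Finset.sum_congr rfl fun b' _ => h1 a' b']
      simp only [Finset.sum_add_distrib]
      rw [Stmt18.sum_collapse₂, Stmt18.sum_collapse₂]
    rw [Finset.sum_congr rfl fun i _ => hin i, Finset.sum_add_distrib]
    show Stmt18.aS φ * (Stmt18.aZ φ i0 i0 + Stmt18.aZ φ i1 i1) * Stmt18.aS φ = _
    rw [mul_add, add_mul]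
    rfl
  have hcomm : KH * QH - QH * KH
      = Stmt18.sd φ (Stmt18.aK φ i0 i1 * Stmt18.aQy φ i0 i1
          - Stmt18.aQy φ i0 i1 * Stmt18.aK φ i0 i1) := by
    rw [hKH, hQH,
      Stmt18.sd_mul t c φ hφ _ _ (Stmt18.hSK t c φ hφ i0 i1) (Stmt18.hSQ t c φ hφ i0 i1),
      Stmt18.sd_mul t c φ hφ _ _ (Stmt18.hSQ t c φ hφ i0 i1) (Stmt18.hSK t c φ hφ i0 i1),
      ← map_sub]
  have hFFmem : ∀ a b a' b' : Fin r, Stmt18.aF φ a b * Stmt18.aF φ a' b'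
      ∈ Submodule.span k {u : A | ∃ z1 z2 : Matrix (Fin r) (Fin r) k, u = D z1 * D z2} :=
    fun a b a' b' => Submodule.subset_span
      ⟨Matrix.single a b 1, Matrix.single a' b' 1, by rw [hDF, hDF]⟩
  refine ⟨c • (∑ b : Fin r, (Stmt18.aF φ i0 b * Stmt18.aF φ b i0
        + Stmt18.aF φ i1 b * Stmt18.aF φ b i1))
      - c • (Stmt18.aF φ i0 i0 * Stmt18.aF φ i0 i0 - Stmt18.aF φ i0 i1 * Stmt18.aF φ i1 i0
        - Stmt18.aF φ i1 i0 * Stmt18.aF φ i0 i1 + Stmt18.aF φ i1 i1 * Stmt18.aF φ i1 i1),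
    ?_, ?_⟩
  · exact Submodule.sub_mem _
      (Submodule.smul_mem _ _ (Submodule.sum_mem _ fun b _ =>
        Submodule.add_mem _ (hFFmem _ _ _ _) (hFFmem _ _ _ _)))
      (Submodule.smul_mem _ _ (Submodule.add_mem _
        (Submodule.sub_mem _ (Submodule.sub_mem _ (hFFmem _ _ _ _) (hFFmem _ _ _ _))
          (hFFmem _ _ _ _)) (hFFmem _ _ _ _)))
  · rw [hcomm, Stmt18.main_identity t c φ hφ i0 i1 hpq, hD2]
end
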